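/- Let X be a complex Banach space and L(X) the Banach algebra of bounded linear operators on X. Suppose A and D have strongly Drazin inverses. If CB = 0, BD = 0 and CA = 0, then the operator matrix [[A, B], [C, D]] has a Hirano inverse in M₂(L(X)). -/

import Mathlib

/-- `a` has a Hirano inverse: there exists `z` with `az = za`, `z = zaz`,
and `a^2 - az` nilpotent. -/
def HasHiranoInverse {R : Type*} [Ring R] (a : R) : Prop :=
  ∃ z : R, a * z = z * a ∧ z = z * a * z ∧ IsNilpotent (a ^ 2 - a * z)

/-- `a` has a strongly Drazin inverse: there exists `z` with `az = za`, `z = zaz`,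
and `a - az` nilpotent. -/
def HasStronglyDrazinInverse {R : Type*} [Ring R] (a : R) : Prop :=
  ∃ z : R, a * z = z * a ∧ z = z * a * z ∧ IsNilpotent (a - a * z)

/-!
Split the matrix as `S + N` with `S = diag(A, D)` and `N = !![0, B; C, 0]`; the hypotheses give
`N * S = 0` and `N ^ 4 = 0`. A strongly Drazin invertible `a` has `a - a ^ 3` nilpotent, and this
property survives adding a nilpotent `y` with `y * a = 0`: then
`(a + y) - (a + y) ^ 3 = w * y + (a - a ^ 3)` for `w = 1 - a ^ 2 - a * y - y ^ 2`, where `w * y`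
kills `a - a ^ 3` and is nilpotent because `y * w = y - y ^ 3`. Finally, `a - a ^ 3` nilpotent
forces a Hirano inverse: in the commutative subring generated by `a`, the element `a ^ 2` is
idempotent modulo the nilradical, so lifting that idempotent to `e` and inverting `a ^ 2` on the
corner `e` gives `z` with `a * z = e`.
-/

theorem IsNilpotent.mul_comm {M : Type*} [MonoidWithZero M] {x y : M} (h : IsNilpotent (x * y)) :
    IsNilpotent (y * x) := by
  obtain ⟨n, hn⟩ := h
  refine ⟨n + 1, ?_⟩
  rw [pow_succ', mul_assoc, ← mul_pow_mul, hn, zero_mul, mul_zero]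

section Semiring

variable {R : Type*} [Semiring R]

theorem add_pow_mul_right_of_mul_eq_zero {x y : R} (h : x * y = 0) (k : ℕ) :
    (x + y) ^ k * y = y ^ (k + 1) := by
  induction k with
  | zero => simp
  | succ k ih => rw [pow_succ, mul_assoc, add_mul, h, zero_add, ← mul_assoc, ih, ← pow_succ]

theorem IsNilpotent.add_of_mul_eq_zero {x y : R} (h : x * y = 0) (hx : IsNilpotent x)
    (hy : IsNilpotent y) : IsNilpotent (x + y) := by
  obtain ⟨m, hm⟩ := hx
  obtain ⟨n, hn⟩ := hy
  -- as `(x + y) ^ k * y = y ^ (k + 1)`, beyond `y ^ n = 0` each further factor `x + y` acts as `x`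
  have key : ∀ j, (x + y) ^ (n + j) = (x + y) ^ n * x ^ j := by
    intro j
    induction j with
    | zero => simp
    | succ j ih =>
      rw [← add_assoc, _root_.pow_succ, mul_add, add_pow_mul_right_of_mul_eq_zero h,
        pow_eq_zero_of_le (by omega) hn, add_zero, ih, mul_assoc, _root_.pow_succ]
  exact ⟨n + m, by rw [key, hm, mul_zero]⟩

end Semiring

section Ring

variable {R : Type*} [Ring R]

theorem HasHiranoInverse.map {S F : Type*} [Ring S] [FunLike F R S] [RingHomClass F R S]
    {a : R} (h : HasHiranoInverse a) (f : F) : HasHiranoInverse (f a) := by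
  obtain ⟨z, hc, hz, hn⟩ := h
  refine ⟨f z, ?_, ?_, ?_⟩
  · rw [← map_mul, hc, map_mul]
  · rw [← map_mul, ← map_mul, ← hz]
  · simpa only [map_sub, map_mul, map_pow] using hn.map f

theorem HasStronglyDrazinInverse.isNilpotent_sub_pow_three {a : R}
    (h : HasStronglyDrazinInverse a) : IsNilpotent (a - a ^ 3) := by
  obtain ⟨z, hc, hz, hn⟩ := h
  set p := a * z
  have hap : Commute a p := by simp only [p, Commute, SemiconjBy, ← mul_assoc, hc]
  have hpp : p * p = p := by simp only [p]; rw [mul_assoc, ← mul_assoc z, ← hz]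
  have hsq : a - a ^ 2 = (a - p) * (1 - a - p) := by
    have : (a - p) * (1 - a - p) = a - a ^ 2 + (p * a - a * p) + (p * p - p) := by noncomm_ring
    rw [this, hap.eq, hpp, sub_self, sub_self, add_zero, add_zero]
  have hsq_nil : IsNilpotent (a - a ^ 2) := by
    have hpa : Commute (a - p) a := (Commute.refl a).sub_left hap.symm
    have hpp' : Commute (a - p) p := hap.sub_left (Commute.refl p)
    rw [hsq]
    exact (((Commute.one_right _).sub_right hpa).sub_right hpp').isNilpotent_mul_right hn
  have hcube : a - a ^ 3 = (a - a ^ 2) * (1 + a) := by noncomm_ring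
  rw [hcube]
  exact ((Commute.one_right _).add_right
    ((Commute.refl a).sub_left ((Commute.refl a).pow_left 2))).isNilpotent_mul_right hsq_nil

theorem isNilpotent_add_sub_pow_three_of_mul_eq_zero {x y : R} (hyx : y * x = 0)
    (hx : IsNilpotent (x - x ^ 3)) (hy : IsNilpotent y) : IsNilpotent (x + y - (x + y) ^ 3) := by
  set w := 1 - x ^ 2 - x * y - y ^ 2
  have hsplit : x + y - (x + y) ^ 3 = w * y + (x - x ^ 3) := by
    have : x + y - (x + y) ^ 3 = w * y + (x - x ^ 3)
        - (x * (y * x) + y * x * x + y * x * y + y * (y * x)) := by simp only [w]; noncomm_ring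
    rw [this, hyx]; simp
  have hwy : IsNilpotent (w * y) := by
    have : y * w = y * (1 - y ^ 2) - (y * x * x + y * x * y) := by simp only [w]; noncomm_ring
    refine IsNilpotent.mul_comm ?_
    rw [this, hyx]
    simpa using
      ((Commute.one_right y).sub_right ((Commute.refl y).pow_right 2)).isNilpotent_mul_right hy
  have hprod : w * y * (x - x ^ 3) = 0 := by
    have : w * y * (x - x ^ 3) = w * (y * x) * (1 - x ^ 2) := by simp only [w]; noncomm_ring
    rw [this, hyx, mul_zero, zero_mul]
  rw [hsplit]
  exact hwy.add_of_mul_eq_zero hprod hx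

end Ring

section CommRing

variable {R : Type*} [CommRing R]

theorem exists_isIdempotentElem_isNilpotent_sub {x : R} (hx : IsNilpotent (x - x ^ 2)) :
    ∃ e : R, IsIdempotentElem e ∧ IsNilpotent (x - e) := by
  let f := Ideal.Quotient.mk (nilradical R)
  have hker : ∀ y ∈ RingHom.ker f, IsNilpotent y := fun y hy => by
    rwa [Ideal.mk_ker, mem_nilradical] at hy
  have hfx : IsIdempotentElem (f x) := by
    rw [IsIdempotentElem, ← map_mul, Ideal.Quotient.eq, ← pow_two, ← neg_sub, mem_nilradical]
    exact hx.neg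
  obtain ⟨e, he, hfe⟩ :=
    exists_isIdempotentElem_eq_of_ker_isNilpotent f hker (f x) ⟨x, rfl⟩ hfx
  exact ⟨e, he, mem_nilradical.mp (Ideal.Quotient.eq.mp hfe.symm)⟩

theorem hasHiranoInverse_of_isNilpotent_sub_pow_three_of_commRing {a : R}
    (h : IsNilpotent (a - a ^ 3)) : HasHiranoInverse a := by
  have hsq : IsNilpotent (a ^ 2 - (a ^ 2) ^ 2) := by
    have : a ^ 2 - (a ^ 2) ^ 2 = a * (a - a ^ 3) := by ring
    rw [this]
    exact (Commute.all _ _).isNilpotent_mul_left h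
  obtain ⟨e, he, hne⟩ := exists_isIdempotentElem_isNilpotent_sub hsq
  -- `u = 1 + (a ^ 2 - e) * e = a ^ 2 * e + (1 - e)` inverts `a ^ 2` on the corner `e`
  obtain ⟨v, hv⟩ : ∃ v, (1 + (a ^ 2 - e) * e) * v = 1 :=
    (((Commute.all _ _).isNilpotent_mul_right hne).isUnit_one_add).exists_right_inv
  have hev : a ^ 2 * e * v = e := by linear_combination e * hv + (v + e * v - a ^ 2 * v) * he.eq
  refine ⟨a * e * v, by ring, ?_, ?_⟩
  · linear_combination -(a * e * v) * hev - a * v * he.eq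
  · have : a ^ 2 - a * (a * e * v) = a ^ 2 - e := by linear_combination -hev
    rwa [this]

end CommRing

open scoped IsMulCommutative in
theorem HasHiranoInverse.of_isNilpotent_sub_pow_three {R : Type*} [Ring R] {a : R}
    (h : IsNilpotent (a - a ^ 3)) : HasHiranoInverse a := by
  let S := Subring.closure {a}
  have : IsMulCommutative S := Subring.isMulCommutative_closure (by simp)
  let a' : S := ⟨a, Subring.subset_closure rfl⟩
  have h' : IsNilpotent (a' - a' ^ 3) := (IsNilpotent.map_iff S.subtype_injective).mp h
  exact (hasHiranoInverse_of_isNilpotent_sub_pow_three_of_commRing h').map S.subtype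

theorem Pi.isNilpotent_of_forall {ι R : Type*} [Finite ι] [MonoidWithZero R] {v : ι → R}
    (h : ∀ i, IsNilpotent (v i)) : IsNilpotent v := by
  choose n hn using h
  have := Fintype.ofFinite ι
  refine ⟨∑ i, n i, funext fun i => ?_⟩
  exact pow_eq_zero_of_le
    (Finset.single_le_sum (fun j _ => Nat.zero_le (n j)) (Finset.mem_univ i)) (hn i)

theorem Matrix.isNilpotent_diagonal {n R : Type*} [Fintype n] [DecidableEq n] [Semiring R]
    {v : n → R} (h : ∀ i, IsNilpotent (v i)) : IsNilpotent (Matrix.diagonal v) :=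
  (Pi.isNilpotent_of_forall h).map (Matrix.diagonalRingHom n R)

theorem hasHiranoInverse_fin_two {R : Type*} [Ring R] {A B C D : R}
    (hA : IsNilpotent (A - A ^ 3)) (hD : IsNilpotent (D - D ^ 3))
    (hCB : C * B = 0) (hBD : B * D = 0) (hCA : C * A = 0) :
    HasHiranoInverse !![A, B; C, D] := by
  set S := Matrix.diagonal ![A, D]
  set N := !![0, B; C, 0]
  have hsplit : !![A, B; C, D] = S + N := by
    ext i j; fin_cases i <;> fin_cases j <;> simp [S, N]
  have hNS : N * S = 0 := by
    ext i j; fin_cases i <;> fin_cases j <;> simp [S, N, hBD, hCA]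
  have hN : IsNilpotent N := by
    refine ⟨4, ?_⟩
    ext i j; fin_cases i <;> fin_cases j <;> simp [N, pow_succ, mul_assoc, hCB]
  have hS : IsNilpotent (S - S ^ 3) := by
    simp only [S]
    rw [Matrix.diagonal_pow, Matrix.diagonal_sub]
    exact Matrix.isNilpotent_diagonal
      (Fin.forall_fin_two.mpr ⟨by simpa using hA, by simpa using hD⟩)
  rw [hsplit]
  exact .of_isNilpotent_sub_pow_three (isNilpotent_add_sub_pow_three_of_mul_eq_zero hNS hS hN)

variable {X : Type*} [NormedAddCommGroup X] [NormedSpace ℂ X] [CompleteSpace X]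

theorem hirano_perturb_cor29 (A B C D : X →L[ℂ] X)
    (hA : HasStronglyDrazinInverse A)
    (hD : HasStronglyDrazinInverse D)
    (h1 : C * B = 0)
    (h2 : B * D = 0)
    (h3 : C * A = 0) :
    HasHiranoInverse (!![A, B; C, D] : Matrix (Fin 2) (Fin 2) (X →L[ℂ] X)) :=
  hasHiranoInverse_fin_two hA.isNilpotent_sub_pow_three hD.isNilpotent_sub_pow_three h1 h2 h3
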